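/- The map that sends a ballot sequence B = (b_1,...,b_{2n}) (with n ones and n zeros, every prefix having at least as many ones as zeros) to the sequence (d_1,...,d_n), where d_1 is the number of 1s before the first 0 of B and d_i (for i > 1) is the number of 1s strictly between the (i-1)-st 0 and the i-th 0 of B, is a bijection onto the set of sequences of nonnegative integers with sum_{i=1}^n d_i = n and sum_{i=1}^{l} d_{n+1-i} <= l for all 1 <= l <= n. -/

import Mathlib

/-- A plane (non-crossing) perfect matching on the `2n` points `0, …, 2n-1`
in convex position. -/
structure NCMatching (n : ℕ) where
  pairs : Finset (ℕ × ℕ)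
  mem_lt : ∀ p ∈ pairs, p.1 < p.2 ∧ p.2 < 2 * n
  covers : ∀ v, v < 2 * n → ∃! p, p ∈ pairs ∧ (p.1 = v ∨ p.2 = v)
  noncross : ∀ p ∈ pairs, ∀ q ∈ pairs, ¬ (p.1 < q.1 ∧ q.1 < p.2 ∧ p.2 < q.2)

/-- Outdegree of vertex `v` (1 if `v` is matched to a larger vertex, else 0). -/
def NCMatching.out {n : ℕ} (M : NCMatching n) (v : ℕ) : ℕ :=
  (M.pairs.filter fun p => p.1 = v).card

/-- The outdegree sequence `(b_1, …, b_{2n})` of a matching. -/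
def NCMatching.outList {n : ℕ} (M : NCMatching n) : List ℕ :=
  (List.range (2 * n)).map M.out

/-- A triangulation of the convex polygon with vertices `0, …, n+1` in convex
position: a maximal set of pairwise non-crossing diagonals (`n-1` many). -/
structure Triangulation (n : ℕ) where
  diag : Finset (ℕ × ℕ)
  isDiag : ∀ e ∈ diag, e.1 + 2 ≤ e.2 ∧ e.2 ≤ n + 1 ∧ ¬(e.1 = 0 ∧ e.2 = n + 1)
  noncross : ∀ e ∈ diag, ∀ f ∈ diag, ¬ (e.1 < f.1 ∧ f.1 < e.2 ∧ e.2 < f.2)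
  card_diag : diag.card = n - 1

/-- Outdegree of point `i` in a triangulation: edges are directed from lower to
higher index; hull edges are not counted, except `p_1 p_{n+2}` (counted at `0`). -/
def Triangulation.out {n : ℕ} (T : Triangulation n) (i : ℕ) : ℕ :=
  (T.diag.filter fun e => e.1 = i).card + (if i = 0 then 1 else 0)

/-- The outdegree sequence `(d_1, …, d_n)` of a triangulation. -/
def Triangulation.outList {n : ℕ} (T : Triangulation n) : List ℕ :=
  (List.range n).map T.out

/-- Ballot sequences of length `2n`: 0/1 sequences with `n` ones whose every
prefix has at least as many ones as zeros. -/
def IsBallot (n : ℕ) (l : List ℕ) : Prop :=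
  l.length = 2 * n ∧ (∀ x ∈ l, x = 0 ∨ x = 1) ∧ l.sum = n ∧
    ∀ m, m ≤ 2 * n → m ≤ 2 * (l.take m).sum

/-- Valid outdegree sequences of triangulations of a convex `(n+2)`-gon. -/
def IsTriDeg (n : ℕ) (d : List ℕ) : Prop :=
  d.length = n ∧ d.sum = n ∧ ∀ l, l ≤ n → (d.reverse.take l).sum ≤ l

/-- From a degree sequence `(d_1,…,d_n)` to the ballot sequence consisting of
`d_i` ones followed by a zero, for each `i`. -/
def degToBallot (d : List ℕ) : List ℕ :=
  (d.map fun x => List.replicate x 1 ++ [0]).flatten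

/-- From a ballot sequence `B` to the sequence `(d_1,…,d_n)` where `d_i` is the
number of ones between the `(i-1)`-st and the `i`-th zero of `B`. -/
def ballotToDeg (B : List ℕ) : List ℕ :=
  ((B.splitOn 0).map List.length).dropLast

/-- The bitonic `k`-coloring `c_1,…,c_k,c_k,…,c_1,c_1,…` of the vertices. -/
def bitColor (k i : ℕ) : ℕ :=
  if (i / k) % 2 = 0 then i % k else k - 1 - i % k

/-- A perfect `k`-colored (monochromatic) matching: every edge joins two
vertices of the same color. -/
def Mono (k : ℕ) {n : ℕ} (M : NCMatching n) : Prop :=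
  ∀ p ∈ M.pairs, bitColor k p.1 = bitColor k p.2

/-- Valid block structure: within each block of `k` consecutive vertices, every
vertex with an outgoing edge is followed only by vertices with outgoing edges. -/
def ValidBlock (k : ℕ) {n : ℕ} (M : NCMatching n) : Prop :=
  ∀ u v, v < 2 * n → u / k = v / k → u < v → M.out u = 1 → M.out v = 1

/-- The hull edges of the convex polygon on `0, …, n+1`. -/
def hullEdges (n : ℕ) : Finset (ℕ × ℕ) :=
  ((Finset.range (n + 1)).image fun i => (i, i + 1)) ∪ {(0, n + 1)}

/-- The edges of the face with vertex set `S` (in convex position): consecutive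
pairs of `S` together with the pair `(min S, max S)`. -/
def faceEdges (S : Finset ℕ) : Finset (ℕ × ℕ) :=
  (S ×ˢ S).filter fun p => p.1 < p.2 ∧
    ((∀ c ∈ S, ¬ (p.1 < c ∧ c < p.2)) ∨ (∀ c ∈ S, p.1 ≤ c ∧ c ≤ p.2))

/-- A `t`-gonal tiling of the convex polygon on the points `0, …, n+1`:
a plane graph all of whose bounded faces are `t`-gons, given by its set of
(bounded) faces. -/
structure Tiling (t n : ℕ) where
  faces : Finset (Finset ℕ)
  sub : ∀ S ∈ faces, S ⊆ Finset.range (n + 2)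
  size : ∀ S ∈ faces, S.card = t
  noncross : ∀ S ∈ faces, ∀ S' ∈ faces, ∀ e ∈ faceEdges S, ∀ e' ∈ faceEdges S',
      ¬ (e.1 < e'.1 ∧ e'.1 < e.2 ∧ e.2 < e'.2)
  share : ∀ S ∈ faces, ∀ S' ∈ faces, S ≠ S' → (S ∩ S').card ≤ 2
  boundary : ∀ e ∈ hullEdges n, (faces.filter fun S => e ∈ faceEdges S).card = 1
  interior : ∀ S ∈ faces, ∀ e ∈ faceEdges S, e ∉ hullEdges n →
      (faces.filter fun S' => e ∈ faceEdges S').card = 2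

/-- The dual graph of a tiling: one vertex per bounded face, two faces adjacent
iff they share a common edge. -/
def dualGraph {t n : ℕ} (T : Tiling t n) : SimpleGraph {S // S ∈ T.faces} where
  Adj A B := A ≠ B ∧ (faceEdges A.1 ∩ faceEdges B.1).Nonempty
  symm := by
    constructor
    rintro A B ⟨h1, h2⟩
    exact ⟨Ne.symm h1, by rwa [Finset.inter_comm]⟩
  loopless := by constructor; rintro A ⟨h, -⟩; exact h rfl

/-- An ear of a tiling: a face all but one of whose edges lie on the hull. -/
def IsEar {t n : ℕ} (T : Tiling t n) (S : Finset ℕ) : Prop :=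
  S ∈ T.faces ∧ (faceEdges S \ hullEdges n).card = 1

/-- A tiling is a subgraph of a triangulation if each of its non-hull edges is
a diagonal of the triangulation. -/
def SubTri {t n : ℕ} (T : Tiling t n) (𝒯 : Triangulation n) : Prop :=
  ∀ S ∈ T.faces, ∀ e ∈ faceEdges S, e ∉ hullEdges n → e ∈ 𝒯.diag

/-- A triangulation is `k`-color valid if, under the outdegree-sequence
bijection, it corresponds to a perfect `k`-colored matching. -/
def KColorValidTri (k : ℕ) {n : ℕ} (𝒯 : Triangulation n) : Prop :=
  ∃ M : NCMatching n, Mono k M ∧ M.outList = degToBallot 𝒯.outList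

/-- A `(k+2)`-gonal tiling is `k`-color valid if it is a subgraph of some
`k`-color valid triangulation. -/
def KColorValidTiling (k : ℕ) {n : ℕ} (T : Tiling (k + 2) n) : Prop :=
  ∃ 𝒯 : Triangulation n, KColorValidTri k 𝒯 ∧ SubTri T 𝒯

/-! `degToBallot` inverts `ballotToDeg` on ballot sequences, so the theorem reduces to showing
that `degToBallot` maps exactly the valid outdegree sequences to ballot sequences. Reading the
ballot sequence `1^{d_1} 0 1^{d_2} 0 ⋯` block by block, its prefix condition becomes
`j ≤ d_1 + ⋯ + d_j` for all `j`; since `∑ d_i = n` and there are `n` terms, this is equivalent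
to the suffix condition `d_n + ⋯ + d_{n+1-l} ≤ l`. -/

open List

@[simp]
lemma degToBallot_nil : degToBallot [] = [] := rfl

@[simp]
lemma degToBallot_cons (a : ℕ) (d : List ℕ) :
    degToBallot (a :: d) = replicate a 1 ++ 0 :: degToBallot d := by
  simp [degToBallot]

@[simp]
lemma sum_degToBallot (d : List ℕ) : (degToBallot d).sum = d.sum := by
  induction d with
  | nil => rfl
  | cons a d ih => simp [ih]

@[simp]
lemma length_degToBallot (d : List ℕ) : (degToBallot d).length = d.sum + d.length := by
  induction d with
  | nil => rfl
  | cons a d ih =>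
    simp only [degToBallot_cons, length_append, length_replicate, length_cons, sum_cons, ih]
    omega

lemma eq_zero_or_eq_one_of_mem_degToBallot {d : List ℕ} {x : ℕ} (hx : x ∈ degToBallot d) :
    x = 0 ∨ x = 1 := by
  induction d with
  | nil => simp at hx
  | cons a d ih =>
    simp only [degToBallot_cons, mem_append, mem_cons] at hx
    rcases hx with hx | hx | hx
    · exact Or.inr (eq_of_mem_replicate hx)
    · exact Or.inl hx
    · exact ih hx

lemma splitOn_degToBallot (d : List ℕ) :
    (degToBallot d).splitOn 0 = d.map (replicate · 1) ++ [[]] := by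
  induction d with
  | nil => rfl
  | cons a d ih =>
    rw [degToBallot_cons, splitOn, splitOnP_append_cons_of_forall_mem
      (fun x hx => by simp [eq_of_mem_replicate hx]) 0 (by simp)]
    exact congrArg _ ih

@[simp]
lemma ballotToDeg_degToBallot (d : List ℕ) : ballotToDeg (degToBallot d) = d := by
  simp [ballotToDeg, splitOn_degToBallot, Function.comp_def]

-- A leading `1` is absorbed into the first block.
lemma exists_degToBallot_eq_append_zero {B : List ℕ} (hB : ∀ x ∈ B, x = 0 ∨ x = 1) :
    ∃ d, degToBallot d = B ++ [0] := by
  induction B with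
  | nil => exact ⟨[0], rfl⟩
  | cons x B ih =>
    obtain ⟨d, hd⟩ := ih fun y hy => hB y (mem_cons_of_mem x hy)
    rcases hB x mem_cons_self with rfl | rfl
    · exact ⟨0 :: d, by simp [hd]⟩
    · obtain ⟨a, d, rfl⟩ : ∃ a d', d = a :: d' := by
        cases d with
        | nil => simp at hd
        | cons a d' => exact ⟨a, d', rfl⟩
      refine ⟨(a + 1) :: d, ?_⟩
      rw [cons_append, ← hd]
      simp [replicate_succ]

-- A nonempty ballot sequence ends in `0`: its prefix of length `2n - 1` already holds all `n` ones.
lemma IsBallot.exists_degToBallot_eq {n : ℕ} {B : List ℕ} (hB : IsBallot n B) :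
    ∃ d, degToBallot d = B := by
  obtain ⟨hlen, h01, hsum, hpre⟩ := hB
  rcases eq_or_ne B [] with rfl | hne
  · exact ⟨[], rfl⟩
  have hlast : B.getLast hne = 0 := by
    have hsplit := dropLast_append_getLast hne
    have htake : B.take (2 * n - 1) = B.dropLast := by rw [dropLast_eq_take, hlen]
    have hprefix := hpre (2 * n - 1) (by omega)
    have hsum' := congrArg List.sum hsplit
    rw [sum_append, sum_singleton, hsum] at hsum'
    rw [htake] at hprefix
    have := length_pos_of_ne_nil hne
    rcases h01 _ (getLast_mem hne) with h | h <;> omega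
  obtain ⟨d, hd⟩ := exists_degToBallot_eq_append_zero
    fun x hx => h01 x (mem_of_mem_dropLast hx)
  exact ⟨d, by rw [hd, ← hlast, dropLast_append_getLast]⟩

lemma IsBallot.degToBallot_ballotToDeg {n : ℕ} {B : List ℕ} (hB : IsBallot n B) :
    degToBallot (ballotToDeg B) = B := by
  obtain ⟨d, rfl⟩ := hB.exists_degToBallot_eq
  rw [ballotToDeg_degToBallot]

-- `s` is the surplus of ones over zeros in what precedes `1^a 0 B`.
lemma ballot_prefix_replicate_append_iff (a s : ℕ) (B : List ℕ) :
    (∀ m ≤ (replicate a 1 ++ 0 :: B).length,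
        m ≤ 2 * ((replicate a 1 ++ 0 :: B).take m).sum + s) ↔
      1 ≤ a + s ∧ ∀ m ≤ B.length, m ≤ 2 * (B.take m).sum + (a + s - 1) := by
  have htake (m : ℕ) : (replicate a 1 ++ 0 :: B).take (a + 1 + m) =
      replicate a 1 ++ 0 :: B.take m := by
    rw [take_append, take_replicate, length_replicate, show a + 1 + m - a = m + 1 by omega]
    simp [Nat.min_eq_right (by omega : a ≤ a + 1 + m)]
  constructor
  · intro h
    have h0 := h (a + 1 + 0) (by simp)
    rw [htake] at h0
    simp only [sum_append, sum_replicate, take_zero, sum_cons, sum_nil, smul_eq_mul] at h0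
    refine ⟨by omega, fun m hm => ?_⟩
    have hm' := h (a + 1 + m) (by simp only [length_append, length_replicate, length_cons]; omega)
    rw [htake] at hm'
    simp only [sum_append, sum_replicate, sum_cons, smul_eq_mul] at hm'
    omega
  · rintro ⟨hs, h⟩ m hm
    rcases le_or_gt m a with hma | hma
    · rw [take_append_of_le_length (by simpa using hma), take_replicate, sum_replicate]
      simp only [smul_eq_mul]
      omega
    · obtain ⟨m, rfl⟩ : ∃ m', m = a + 1 + m' := ⟨m - (a + 1), by omega⟩
      have hm' := h m (by simp only [length_append, length_replicate, length_cons] at hm; omega)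
      rw [htake]
      simp only [sum_append, sum_replicate, sum_cons, smul_eq_mul]
      omega

lemma prefix_sum_cons_iff (a s : ℕ) (d : List ℕ) :
    (∀ j ≤ (a :: d).length, j ≤ ((a :: d).take j).sum + s) ↔
      1 ≤ a + s ∧ ∀ j ≤ d.length, j ≤ (d.take j).sum + (a + s - 1) := by
  constructor
  · intro h
    refine ⟨by simpa using h 1 (by simp), fun j hj => ?_⟩
    have := h (j + 1) (by simp [hj])
    simp only [take_succ_cons, sum_cons] at this
    omega
  · rintro ⟨hs, h⟩ (_ | j) hj
    · omega
    · have := h j (by simpa using hj)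
      simp only [take_succ_cons, sum_cons]
      omega

lemma ballot_prefix_degToBallot_iff (d : List ℕ) (s : ℕ) :
    (∀ m ≤ (degToBallot d).length, m ≤ 2 * ((degToBallot d).take m).sum + s) ↔
      ∀ j ≤ d.length, j ≤ (d.take j).sum + s := by
  induction d generalizing s with
  | nil => simp
  | cons a d ih =>
    rw [degToBallot_cons, ballot_prefix_replicate_append_iff, prefix_sum_cons_iff, ih]

lemma sum_take_reverse_add_sum_take (d : List ℕ) (l : ℕ) :
    (d.reverse.take l).sum + (d.take (d.length - l)).sum = d.sum := by
  rw [take_reverse, sum_reverse, Nat.add_comm, sum_take_add_sum_drop]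

lemma isTriDeg_iff {n : ℕ} {d : List ℕ} :
    IsTriDeg n d ↔ d.length = n ∧ d.sum = n ∧ ∀ j ≤ n, j ≤ (d.take j).sum := by
  refine and_congr_right fun hlen => and_congr_right fun hsum =>
    ⟨fun h j hj => ?_, fun h l hl => ?_⟩
  · have := sum_take_reverse_add_sum_take d (n - j)
    have := h (n - j) (by omega)
    rw [hlen, show n - (n - j) = j by omega] at *
    omega
  · have := sum_take_reverse_add_sum_take d l
    have := h (n - l) (by omega)
    rw [hlen] at *
    omega

lemma isBallot_degToBallot_iff {n : ℕ} {d : List ℕ} :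
    IsBallot n (degToBallot d) ↔ IsTriDeg n d := by
  rw [isTriDeg_iff]
  constructor
  · rintro ⟨hlen, -, hsum, hpre⟩
    rw [sum_degToBallot] at hsum
    rw [length_degToBallot] at hlen
    refine ⟨by omega, hsum, fun j hj => ?_⟩
    have := (ballot_prefix_degToBallot_iff d 0).mp (by simpa [hlen] using hpre) j (by omega)
    simpa using this
  · rintro ⟨hlen, hsum, hpre⟩
    refine ⟨by rw [length_degToBallot, hlen, hsum]; omega,
      fun x => eq_zero_or_eq_one_of_mem_degToBallot, by simp [hsum], fun m hm => ?_⟩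
    have := (ballot_prefix_degToBallot_iff d 0).mpr (by simpa [hlen] using hpre) m
      (by rw [length_degToBallot, hlen, hsum]; omega)
    simpa using this

/-- The map sending a ballot sequence `B` to the sequence `(d_1,…,d_n)`, where
`d_i` counts the ones between the `(i-1)`-st and `i`-th zero of `B`, is a
bijection onto the set of valid triangulation outdegree sequences. -/
theorem stmt8 (n : ℕ) :
    (∀ B : List ℕ, IsBallot n B → IsTriDeg n (ballotToDeg B)) ∧
    (∀ B B' : List ℕ, IsBallot n B → IsBallot n B' →
      ballotToDeg B = ballotToDeg B' → B = B') ∧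
    (∀ d : List ℕ, IsTriDeg n d → ∃ B : List ℕ, IsBallot n B ∧ ballotToDeg B = d) := by
  refine ⟨fun B hB => ?_, fun B B' hB hB' h => ?_, fun d hd => ?_⟩
  · rw [← isBallot_degToBallot_iff, hB.degToBallot_ballotToDeg]
    exact hB
  · rw [← hB.degToBallot_ballotToDeg, ← hB'.degToBallot_ballotToDeg, h]
  · exact ⟨degToBallot d, isBallot_degToBallot_iff.mpr hd, ballotToDeg_degToBallot d⟩
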